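/- arXiv:1609.04449 — 5 statements merged into one kernel-verified Lean document; each statement's English description precedes it below -/
import Mathlib

section
/- Let G = (V, E) be a DAG with V = {1, ..., n} in topological order. The fractional assignment defined by x_i^t = 1/n for i ≤ t ≤ n and x_i^t = 0 for i > t ≤ n, and x_v^t = min(1, 2^{t-n}/n) for all v ∈ V and n < t ≤ n + ⌈log₂ n⌉, satisfies the LP relaxation constraints: (1) 0 ≤ x_v^t ≤ 1 for all v, t; (2) x_v^0 = 0 for all v; (3) Σ_t x_v^t ≥ 1 for each sink v; (4) x_v^{t+1} ≤ x_v^t + (Σ_{v' ∈ parents(v)} x_{v'}^t)/|parents(v)| for every non-source node v and each round t. -/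
/-- Feasibility of the fractional assignment for the pebbling LP relaxation.
Nodes are `Fin n`, thought of as labels `1,…,n` (node `v` has label `v.val + 1`) in
topological order.  The assignment is `x_i^t = 1/n` for `i ≤ t ≤ n`, `x_i^t = 0` for
`i > t ≤ n`, and `x_v^t = min(1, 2^{t-n}/n)` for `n < t ≤ n + ⌈log₂ n⌉`.  It satisfies:
(1) `0 ≤ x_v^t ≤ 1`; (2) `x_v^0 = 0`; (3) `Σ_t x_v^t ≥ 1` for each sink `v`;
(4) `x_v^{t+1} ≤ x_v^t + (Σ_{v' ∈ parents(v)} x_{v'}^t)/|parents(v)|` for each non-source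
`v` and each round `t`. -/
theorem stmt3 (n : ℕ) (hn : 1 ≤ n) (E : Fin n → Fin n → Prop) [DecidableRel E]
    (hE : ∀ u v, E u v → u < v) :
    ∀ T : ℕ, T = n + Nat.clog 2 n →
    ∀ x : Fin n → ℕ → ℝ,
      (x = fun v t =>
        if t ≤ n then (if v.val + 1 ≤ t then 1 / (n : ℝ) else 0)
        else min 1 ((2 : ℝ) ^ (t - n) / (n : ℝ))) →
    -- (1) the variables lie in [0,1]
    ((∀ (v : Fin n) (t : ℕ), t ≤ T → 0 ≤ x v t ∧ x v t ≤ 1) ∧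
    -- (2) no fractional pebbles at time 0
    (∀ v : Fin n, x v 0 = 0) ∧
    -- (3) every sink is (fractionally) pebbled
    (∀ v : Fin n, (∀ w, ¬ E v w) → 1 ≤ ∑ t ∈ Finset.Icc 1 T, x v t) ∧
    -- (4) legality constraint for every non-source node and every round
    (∀ v : Fin n, (∃ u, E u v) → ∀ t, t < T →
      x v (t + 1) ≤ x v t +
        (∑ u ∈ Finset.univ.filter (fun u => E u v), x u t) /
          ((Finset.univ.filter (fun u => E u v)).card : ℝ))) := by
  intro T hT x hx
  subst hT hx
  have hn0 : (0:ℝ) < n := by exact_mod_cast hn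
  have hinv0 : (0:ℝ) ≤ 1 / n := by positivity
  have hinv1 : (1:ℝ) / n ≤ 1 := by
    rw [div_le_one hn0]; exact_mod_cast hn
  have hx0 : ∀ (w : Fin n) (t : ℕ),
      0 ≤ (if t ≤ n then (if w.val + 1 ≤ t then 1 / (n:ℝ) else 0)
        else min 1 ((2 : ℝ) ^ (t - n) / (n : ℝ))) := by
    intro w t
    split
    · split
      · exact hinv0
      · exact le_refl 0
    · exact le_min zero_le_one (by positivity)
  refine ⟨?_, ?_, ?_, ?_⟩
  · -- (1)
    intro v t _
    refine ⟨hx0 v t, ?_⟩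
    simp only
    split
    · split
      · exact hinv1
      · exact zero_le_one
    · exact min_le_left _ _
  · -- (2)
    intro v; simp
  · -- (3)
    intro v _
    have hT1 : 1 ≤ n + Nat.clog 2 n := le_trans hn (Nat.le_add_right n _)
    have hterm : (if n + Nat.clog 2 n ≤ n then
        (if v.val + 1 ≤ n + Nat.clog 2 n then 1 / (n:ℝ) else 0)
        else min 1 ((2 : ℝ) ^ (n + Nat.clog 2 n - n) / (n : ℝ))) = 1 := by
      by_cases h : n + Nat.clog 2 n ≤ n
      · have hc0 : Nat.clog 2 n = 0 := by omega
        have hn1 : n = 1 := by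
          by_contra hne
          have h2 : 1 < n := by omega
          have := Nat.clog_pos one_lt_two h2
          omega
        subst hn1
        simp
      · rw [if_neg h]
        have hk : n + Nat.clog 2 n - n = Nat.clog 2 n := by omega
        rw [hk]
        refine min_eq_left ?_
        rw [le_div_iff₀ hn0, one_mul]
        exact_mod_cast Nat.le_pow_clog one_lt_two n
    calc (1:ℝ) = _ := hterm.symm
      _ ≤ _ := Finset.single_le_sum (f := fun t =>
          (if t ≤ n then (if v.val + 1 ≤ t then 1 / (n:ℝ) else 0)
            else min 1 ((2 : ℝ) ^ (t - n) / (n : ℝ))))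
          (fun i _ => hx0 v i) (Finset.mem_Icc.mpr ⟨hT1, le_rfl⟩)
  · -- (4)
    intro v hv t ht
    obtain ⟨u0, hu0⟩ := hv
    set P := Finset.univ.filter (fun u => E u v) with hP
    have hcpos : 0 < P.card := Finset.card_pos.mpr ⟨u0, by simp [hP, hu0]⟩
    have hcR : (0:ℝ) < P.card := by exact_mod_cast hcpos
    have hvpar : ∀ u ∈ P, u.val < v.val := by
      intro u hu
      have : E u v := by simpa [hP] using hu
      exact hE u v this
    by_cases h1 : t + 1 ≤ n
    · have h0 : t ≤ n := by omega
      simp only [if_pos h1, if_pos h0]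
      by_cases h2 : v.val + 1 ≤ t + 1
      · by_cases h3 : v.val + 1 ≤ t
        · rw [if_pos h2, if_pos h3]
          have hs : 0 ≤ (∑ u ∈ P, (if u.val + 1 ≤ t then 1/(n:ℝ) else 0)) / P.card := by
            apply div_nonneg _ hcR.le
            apply Finset.sum_nonneg
            intro i _
            split
            · exact hinv0
            · exact le_refl 0
          linarith
        · rw [if_pos h2, if_neg h3]
          have hvt : v.val = t := by omega
          have hsum : (∑ u ∈ P, (if u.val + 1 ≤ t then 1/(n:ℝ) else 0))
              = P.card * (1/n) := by
            rw [Finset.sum_congr rfl (fun u hu => ?_), Finset.sum_const, nsmul_eq_mul]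
            rw [if_pos]
            have := hvpar u hu
            omega
          rw [hsum, mul_comm, mul_div_assoc, div_self hcR.ne', mul_one]
          linarith
      · rw [if_neg h2]
        have h3 : ¬ v.val + 1 ≤ t := by omega
        rw [if_neg h3]
        have hs : 0 ≤ (∑ u ∈ P, (if u.val + 1 ≤ t then 1/(n:ℝ) else 0)) / P.card := by
          apply div_nonneg _ hcR.le
          apply Finset.sum_nonneg
          intro i _
          split
          · exact hinv0
          · exact le_refl 0
        linarith
    · have hnt : n ≤ t := by omega
      have hx_all : ∀ w : Fin n,
          (if t ≤ n then (if w.val + 1 ≤ t then 1 / (n:ℝ) else 0)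
            else min 1 ((2 : ℝ) ^ (t - n) / (n : ℝ)))
          = min 1 ((2 : ℝ) ^ (t - n) / (n : ℝ)) := by
        intro w
        by_cases h : t ≤ n
        · have htn : t = n := le_antisymm h hnt
          subst htn
          rw [if_pos le_rfl, if_pos (by have := w.isLt; omega)]
          rw [Nat.sub_self, pow_zero]
          exact (min_eq_right hinv1).symm
        · rw [if_neg h]
      set a : ℝ := (2:ℝ) ^ (t - n) / n with ha
      have ha0 : 0 ≤ a := by positivity
      beta_reduce
      rw [if_neg (by omega : ¬ t + 1 ≤ n), hx_all v]
      have hsum : (∑ u ∈ P,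
          (if t ≤ n then (if u.val + 1 ≤ t then 1 / (n:ℝ) else 0)
            else min 1 ((2 : ℝ) ^ (t - n) / (n : ℝ)))) = P.card * min 1 a := by
        rw [Finset.sum_congr rfl (fun u _ => hx_all u), Finset.sum_const, nsmul_eq_mul]
      rw [hsum, mul_comm, mul_div_assoc, div_self hcR.ne', mul_one]
      have hpow : (2:ℝ) ^ (t + 1 - n) = 2 * (2:ℝ) ^ (t - n) := by
        rw [show t + 1 - n = (t - n) + 1 by omega, pow_succ]
        ring
      rw [hpow]
      have h2a : (2:ℝ) * (2:ℝ) ^ (t - n) / n = 2 * a := by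
        rw [ha]; ring
      rw [h2a]
      rcases le_total (1:ℝ) (2 * a) with hle | hle
      · rw [min_eq_left hle]
        have : (1/2 : ℝ) ≤ min 1 a := le_min (by norm_num) (by linarith)
        linarith
      · rw [min_eq_right hle]
        have ha1 : a ≤ 1 := by linarith
        rw [min_eq_right ha1]
        linarith
end

section
/- Let G be the DAG on 16 nodes {1,...,16} with edges (i, i+1) for 1 ≤ i < 16, (i, i+9) for 1 ≤ i ≤ 5, and (i, i+7) for 8 ≤ i ≤ 9. Then pcc(G) ≤ 27: the pebbling P_0 = ∅, P_i = {i} for 1 ≤ i ≤ 8, P_{8+j} = {j, 8+j} for 1 ≤ j ≤ 6, P_{15} = {7,14}, P_{16} = {8,14}, P_{17} = {9,15}, P_{18} = {16} is a legal pebbling with cumulative cost 27. -/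
/-- A legal (parallel) pebbling of a DAG with vertex set `V ⊆ ℕ` and edge relation `E`. -/
def LegalPebbling (V : Finset ℕ) (E : ℕ → ℕ → Prop) (t : ℕ) (P : ℕ → Finset ℕ) : Prop :=
  P 0 = ∅ ∧
  (∀ i ≤ t, P i ⊆ V) ∧
  (∀ i, 1 ≤ i → i ≤ t → ∀ v ∈ P i, v ∉ P (i - 1) → ∀ u, E u v → u ∈ P (i - 1)) ∧
  (∀ v ∈ V, (∀ w, ¬ E v w) → ∃ j, 1 ≤ j ∧ j ≤ t ∧ v ∈ P j)

/-- Cumulative cost `cc(P) = Σ_{i=1}^t |P_i|`. -/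
def cc (t : ℕ) (P : ℕ → Finset ℕ) : ℕ := ∑ i ∈ Finset.Icc 1 t, (P i).card

/-- The 16-node DAG with edges `(i,i+1)` for `1 ≤ i < 16`, `(i,i+9)` for `1 ≤ i ≤ 5`,
and `(i,i+7)` for `8 ≤ i ≤ 9`. -/
def edge16 (u v : ℕ) : Prop :=
  (v = u + 1 ∧ 1 ≤ u ∧ u < 16) ∨ (v = u + 9 ∧ 1 ≤ u ∧ u ≤ 5) ∨ (v = u + 7 ∧ 8 ≤ u ∧ u ≤ 9)

/-- The explicit pebbling: `P_0 = ∅`, `P_i = {i}` for `1 ≤ i ≤ 8`,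
`P_{8+j} = {j, 8+j}` for `1 ≤ j ≤ 6`, `P_15 = {7,14}`, `P_16 = {8,14}`,
`P_17 = {9,15}`, `P_18 = {16}`. -/
def P6 : ℕ → Finset ℕ
  | 0 => ∅
  | 15 => {7, 14}
  | 16 => {8, 14}
  | 17 => {9, 15}
  | 18 => {16}
  | i => if i ≤ 8 then {i} else if i ≤ 14 then {i - 8, i} else ∅

lemma legal6 : LegalPebbling (Finset.Icc 1 16) edge16 18 P6 := by
  refine ⟨rfl, ?_, ?_, ?_⟩
  · intro i hi
    interval_cases i <;> decide
  · intro i h1 h2 v hv hnv u hu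
    interval_cases i <;>
      simp only [P6, Nat.reduceSub, Nat.reduceLeDiff, Finset.mem_insert,
        Finset.mem_singleton, if_true, if_false, reduceIte] at hv hnv ⊢ <;>
      rcases hu with ⟨h, _⟩ | ⟨h, _⟩ | ⟨h, _⟩ <;> omega
  · intro v hv h
    simp only [Finset.mem_Icc] at hv
    rcases Nat.lt_or_ge v 16 with h16 | h16
    · exact absurd (Or.inl ⟨rfl, hv.1, h16⟩) (h (v + 1))
    · have : v = 16 := by omega
      subst this
      exact ⟨18, by norm_num, by norm_num, by decide⟩

/-- The pebbling `P6` of the 16-node DAG above is legal with cumulative cost `27`;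
consequently `pcc(G) ≤ 27`. -/
theorem stmt6 :
    LegalPebbling (Finset.Icc 1 16) edge16 18 P6 ∧
    cc 18 P6 = 27 ∧
    sInf {x | ∃ t P, LegalPebbling (Finset.Icc 1 16) edge16 t P ∧ cc t P = x} ≤ 27 := by
  have hcc : cc 18 P6 = 27 := by decide
  refine ⟨legal6, hcc, ?_⟩
  exact csInf_le (OrderBot.bddBelow _) ⟨18, P6, legal6, hcc⟩
end

section
/- Let G be the DAG on 16 nodes {1,...,16} with edges (i, i+1) for 1 ≤ i < 16, (i, i+9) for 1 ≤ i ≤ 5, and (i, i+7) for 8 ≤ i ≤ 9. Then every legal pebbling of G that uses at most 16 rounds has cumulative cost at least 28. -/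
/-- Lower-bound profile. -/
def lb16 (i : ℕ) : ℕ := if i ≤ 8 then 1 else if i ≤ 13 then 3 else if i ≤ 15 then 2 else 1

lemma card1_aux {s : Finset ℕ} {a : ℕ} (ha : a ∈ s) : 1 ≤ s.card :=
  Finset.card_pos.mpr ⟨a, ha⟩

lemma card2_aux {s : Finset ℕ} {a b : ℕ} (ha : a ∈ s) (hb : b ∈ s) (hab : a < b) :
    2 ≤ s.card := by
  have h : ({a, b} : Finset ℕ) ⊆ s := by
    intro x hx
    simp only [Finset.mem_insert, Finset.mem_singleton] at hx
    rcases hx with rfl | rfl <;> assumption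
  have h2 : ({a, b} : Finset ℕ).card = 2 := by
    rw [Finset.card_insert_of_notMem (by simp; omega), Finset.card_singleton]
  calc 2 = ({a, b} : Finset ℕ).card := h2.symm
    _ ≤ s.card := Finset.card_le_card h

lemma card3_aux {s : Finset ℕ} {a b c : ℕ} (ha : a ∈ s) (hb : b ∈ s) (hc : c ∈ s)
    (hab : a < b) (hbc : b < c) : 3 ≤ s.card := by
  have h : ({a, b, c} : Finset ℕ) ⊆ s := by
    intro x hx
    simp only [Finset.mem_insert, Finset.mem_singleton] at hx
    rcases hx with rfl | rfl | rfl <;> assumption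
  have h3 : ({a, b, c} : Finset ℕ).card = 3 := by
    rw [Finset.card_insert_of_notMem (by simp; omega),
      Finset.card_insert_of_notMem (by simp; omega), Finset.card_singleton]
  calc 3 = ({a, b, c} : Finset ℕ).card := h3.symm
    _ ≤ s.card := Finset.card_le_card h

/-- Every legal pebbling of the 16-node DAG above that uses at most 16 rounds has
cumulative cost at least 28. -/
theorem stmt7 (t : ℕ) (P : ℕ → Finset ℕ) (ht : t ≤ 16)
    (hP : LegalPebbling (Finset.Icc 1 16) edge16 t P) :
    28 ≤ cc t P := by
  obtain ⟨h0, hV, hleg, hsink⟩ := hP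
  -- depth bound: any pebble at round i is on a vertex ≤ i
  have hle : ∀ i, i ≤ t → ∀ v ∈ P i, v ≤ i := by
    intro i
    induction i with
    | zero =>
      intro _ v hv
      rw [h0] at hv
      exact absurd hv (Finset.notMem_empty v)
    | succ n ih =>
      intro hn v hv
      by_cases hmem : v ∈ P n
      · exact le_trans (ih (by omega) v hmem) (Nat.le_succ n)
      · have hVv := hV (n + 1) hn hv
        rw [Finset.mem_Icc] at hVv
        rcases Nat.eq_or_lt_of_le hVv.1 with h1 | h2
        · omega
        · have hedge : edge16 (v - 1) v := Or.inl ⟨by omega, by omega, by omega⟩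
          have h := hleg (n + 1) (by omega) hn v hv (by simpa using hmem) (v - 1) hedge
          have := ih (by omega) (v - 1) (by simpa using h)
          omega
  -- the sink 16 must be pebbled, forcing t = 16 and 16 ∈ P 16
  obtain ⟨j, hj1, hjt, hj16⟩ := hsink 16 (by simp) (by
    intro w hw
    rcases hw with ⟨_, _, h⟩ | ⟨_, _, h⟩ | ⟨_, _, h⟩ <;> omega)
  have hj : 16 ≤ j := hle j hjt 16 hj16
  have ht16 : t = 16 := by omega
  subst ht16
  have h16 : 16 ∈ P 16 := by
    have : j = 16 := by omega
    rwa [this] at hj16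
  -- new placement of vertex j at round j forces all parents at round j-1
  have hnew : ∀ i w : ℕ, w = i + 1 → w ≤ 16 → w ∈ P w → ∀ u, edge16 u w → u ∈ P i := by
    intro i w hiw hw hPw u hu
    have h := hleg w (by omega) (by omega) w hPw
      (fun hmem => by have := hle (w - 1) (by omega) w hmem; omega) u hu
    rwa [hiw, Nat.add_sub_cancel] at h
  -- chain facts
  have h15 : 15 ∈ P 15 := hnew 15 16 rfl (by norm_num) h16 15 (Or.inl ⟨by norm_num, by norm_num, by norm_num⟩)
  have h9_15 : 9 ∈ P 15 := hnew 15 16 rfl (by norm_num) h16 9 (Or.inr (Or.inr ⟨by norm_num, by norm_num, by norm_num⟩))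
  have h14 : 14 ∈ P 14 := hnew 14 15 rfl (by norm_num) h15 14 (Or.inl ⟨by norm_num, by norm_num, by norm_num⟩)
  have h8_14 : 8 ∈ P 14 := hnew 14 15 rfl (by norm_num) h15 8 (Or.inr (Or.inr ⟨by norm_num, by norm_num, by norm_num⟩))
  have h13 : 13 ∈ P 13 := hnew 13 14 rfl (by norm_num) h14 13 (Or.inl ⟨by norm_num, by norm_num, by norm_num⟩)
  have h5_13 : 5 ∈ P 13 := hnew 13 14 rfl (by norm_num) h14 5 (Or.inr (Or.inl ⟨by norm_num, by norm_num, by norm_num⟩))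
  have h12 : 12 ∈ P 12 := hnew 12 13 rfl (by norm_num) h13 12 (Or.inl ⟨by norm_num, by norm_num, by norm_num⟩)
  have h4_12 : 4 ∈ P 12 := hnew 12 13 rfl (by norm_num) h13 4 (Or.inr (Or.inl ⟨by norm_num, by norm_num, by norm_num⟩))
  have h11 : 11 ∈ P 11 := hnew 11 12 rfl (by norm_num) h12 11 (Or.inl ⟨by norm_num, by norm_num, by norm_num⟩)
  have h3_11 : 3 ∈ P 11 := hnew 11 12 rfl (by norm_num) h12 3 (Or.inr (Or.inl ⟨by norm_num, by norm_num, by norm_num⟩))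
  have h10 : 10 ∈ P 10 := hnew 10 11 rfl (by norm_num) h11 10 (Or.inl ⟨by norm_num, by norm_num, by norm_num⟩)
  have h2_10 : 2 ∈ P 10 := hnew 10 11 rfl (by norm_num) h11 2 (Or.inr (Or.inl ⟨by norm_num, by norm_num, by norm_num⟩))
  have h9 : 9 ∈ P 9 := hnew 9 10 rfl (by norm_num) h10 9 (Or.inl ⟨by norm_num, by norm_num, by norm_num⟩)
  have h1_9 : 1 ∈ P 9 := hnew 9 10 rfl (by norm_num) h10 1 (Or.inr (Or.inl ⟨by norm_num, by norm_num, by norm_num⟩))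
  have h8 : 8 ∈ P 8 := hnew 8 9 rfl (by norm_num) h9 8 (Or.inl ⟨by norm_num, by norm_num, by norm_num⟩)
  have h7 : 7 ∈ P 7 := hnew 7 8 rfl (by norm_num) h8 7 (Or.inl ⟨by norm_num, by norm_num, by norm_num⟩)
  have h6 : 6 ∈ P 6 := hnew 6 7 rfl (by norm_num) h7 6 (Or.inl ⟨by norm_num, by norm_num, by norm_num⟩)
  have h5 : 5 ∈ P 5 := hnew 5 6 rfl (by norm_num) h6 5 (Or.inl ⟨by norm_num, by norm_num, by norm_num⟩)
  have h4 : 4 ∈ P 4 := hnew 4 5 rfl (by norm_num) h5 4 (Or.inl ⟨by norm_num, by norm_num, by norm_num⟩)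
  have h3 : 3 ∈ P 3 := hnew 3 4 rfl (by norm_num) h4 3 (Or.inl ⟨by norm_num, by norm_num, by norm_num⟩)
  have h2 : 2 ∈ P 2 := hnew 2 3 rfl (by norm_num) h3 2 (Or.inl ⟨by norm_num, by norm_num, by norm_num⟩)
  have h1 : 1 ∈ P 1 := hnew 1 2 rfl (by norm_num) h2 1 (Or.inl ⟨by norm_num, by norm_num, by norm_num⟩)
  -- descent step: a pebble on w ≥ 2 at round i+1 needs w or w-1 at round i
  have hstep : ∀ i w : ℕ, i + 1 ≤ 16 → w ∈ P (i + 1) → 2 ≤ w →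
      w ∈ P i ∨ w - 1 ∈ P i := by
    intro i w hi hw h2w
    by_cases hm : w ∈ P i
    · exact Or.inl hm
    · have hVw := hV (i + 1) hi hw
      rw [Finset.mem_Icc] at hVw
      have h := hleg (i + 1) (by omega) hi w hw (by simpa using hm) (w - 1)
        (Or.inl ⟨by omega, by omega, by omega⟩)
      exact Or.inr (by simpa using h)
  -- descent from 8 ∈ P 14 down to round 9
  obtain ⟨w13, hw13, hlo13, hhi13⟩ : ∃ w, w ∈ P 13 ∧ 7 ≤ w ∧ w ≤ 8 := by
    rcases hstep 13 8 (by norm_num) h8_14 (by norm_num) with h | h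
    · exact ⟨8, h, by norm_num, by norm_num⟩
    · exact ⟨7, h, by norm_num, by norm_num⟩
  obtain ⟨w12, hw12, hlo12, hhi12⟩ : ∃ w, w ∈ P 12 ∧ 6 ≤ w ∧ w ≤ 8 := by
    rcases hstep 12 w13 (by norm_num) hw13 (by omega) with h | h
    · exact ⟨w13, h, by omega, by omega⟩
    · exact ⟨w13 - 1, h, by omega, by omega⟩
  obtain ⟨w11, hw11, hlo11, hhi11⟩ : ∃ w, w ∈ P 11 ∧ 5 ≤ w ∧ w ≤ 8 := by
    rcases hstep 11 w12 (by norm_num) hw12 (by omega) with h | h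
    · exact ⟨w12, h, by omega, by omega⟩
    · exact ⟨w12 - 1, h, by omega, by omega⟩
  obtain ⟨w10, hw10, hlo10, hhi10⟩ : ∃ w, w ∈ P 10 ∧ 4 ≤ w ∧ w ≤ 8 := by
    rcases hstep 10 w11 (by norm_num) hw11 (by omega) with h | h
    · exact ⟨w11, h, by omega, by omega⟩
    · exact ⟨w11 - 1, h, by omega, by omega⟩
  obtain ⟨w9, hw9, hlo9, hhi9⟩ : ∃ w, w ∈ P 9 ∧ 3 ≤ w ∧ w ≤ 8 := by
    rcases hstep 9 w10 (by norm_num) hw10 (by omega) with h | h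
    · exact ⟨w10, h, by omega, by omega⟩
    · exact ⟨w10 - 1, h, by omega, by omega⟩
  -- per-round lower bounds
  have hkey : ∀ i ∈ Finset.Icc 1 16, lb16 i ≤ (P i).card := by
    intro i hi
    rw [Finset.mem_Icc] at hi
    obtain ⟨hi1, hi2⟩ := hi
    interval_cases i
    · exact le_trans (by norm_num [lb16]) (card1_aux h1)
    · exact le_trans (by norm_num [lb16]) (card1_aux h2)
    · exact le_trans (by norm_num [lb16]) (card1_aux h3)
    · exact le_trans (by norm_num [lb16]) (card1_aux h4)
    · exact le_trans (by norm_num [lb16]) (card1_aux h5)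
    · exact le_trans (by norm_num [lb16]) (card1_aux h6)
    · exact le_trans (by norm_num [lb16]) (card1_aux h7)
    · exact le_trans (by norm_num [lb16]) (card1_aux h8)
    · exact le_trans (by norm_num [lb16]) (card3_aux h1_9 hw9 h9 (by omega) (by omega))
    · exact le_trans (by norm_num [lb16]) (card3_aux h2_10 hw10 h10 (by omega) (by omega))
    · exact le_trans (by norm_num [lb16]) (card3_aux h3_11 hw11 h11 (by omega) (by omega))
    · exact le_trans (by norm_num [lb16]) (card3_aux h4_12 hw12 h12 (by omega) (by omega))
    · exact le_trans (by norm_num [lb16]) (card3_aux h5_13 hw13 h13 (by omega) (by omega))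
    · exact le_trans (by norm_num [lb16]) (card2_aux h8_14 h14 (by omega))
    · exact le_trans (by norm_num [lb16]) (card2_aux h9_15 h15 (by omega))
    · exact le_trans (by norm_num [lb16]) (card1_aux h16)
  have hsum : ∑ i ∈ Finset.Icc 1 16, lb16 i ≤ cc 16 P := Finset.sum_le_sum hkey
  have h28 : ∑ i ∈ Finset.Icc 1 16, lb16 i = 28 := by decide
  omega
end

section
/- There exists a DAG G on 16 nodes with depth(G) = 16 (it contains a Hamiltonian directed path) such that the minimum cumulative cost over legal pebblings taking at most 16 rounds is strictly greater than pcc(G); in fact the ratio is at least 28/27. -/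
/-- The edge relation: the Hamiltonian path `1 → 2 → ⋯ → 16` plus the
extra edges `1 → 14`, `2 → 15`, `4 → 16`. -/
def myE (u v : ℕ) : Prop :=
  (1 ≤ u ∧ u ≤ 15 ∧ v = u + 1) ∨ (u = 1 ∧ v = 14) ∨ (u = 2 ∧ v = 15) ∨ (u = 4 ∧ v = 16)

instance : DecidablePred (fun p : ℕ × ℕ => myE p.1 p.2) := by
  intro p; unfold myE; infer_instance

instance (u v : ℕ) : Decidable (myE u v) := by unfold myE; infer_instance

/-- Finset of predecessors of a node under `myE`. -/
def predF (v : ℕ) : Finset ℕ :=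
  (if 2 ≤ v ∧ v ≤ 16 then {v - 1} else ∅) ∪
    (if v = 14 then {1} else if v = 15 then {2} else if v = 16 then {4} else ∅)

lemma mem_predF_of_myE {u v : ℕ} (h : myE u v) : u ∈ predF v := by
  rcases h with ⟨h1, h2, h3⟩ | ⟨h1, h2⟩ | ⟨h1, h2⟩ | ⟨h1, h2⟩
  · subst h3
    unfold predF
    rw [if_pos ⟨by omega, by omega⟩]
    apply Finset.mem_union_left
    simp
  · subst h1; subst h2; decide
  · subst h1; subst h2; decide
  · subst h1; subst h2; decide

/-- The cheap (21-pebble) pebbling using 17 rounds. -/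
def Pu (n : ℕ) : Finset ℕ :=
  if n = 13 then {13, 1}
  else if n = 14 then {14, 2}
  else if n = 15 then {15, 3}
  else if n = 16 then {15, 4}
  else if n = 17 then {16}
  else if 1 ≤ n ∧ n ≤ 12 then {n} else ∅

/-- A 22-pebble pebbling using 16 rounds. -/
def Pb (n : ℕ) : Finset ℕ :=
  if n = 12 then {12, 1}
  else if n = 13 then {13, 1, 2}
  else if n = 14 then {14, 2, 3}
  else if n = 15 then {15, 4}
  else if n = 16 then {16}
  else if 1 ≤ n ∧ n ≤ 11 then {n} else ∅

lemma legal_Pu : LegalPebbling (Finset.Icc 1 16) myE 17 Pu := by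
  refine ⟨by decide, ?_, ?_, ?_⟩
  · intro i hi
    exact (by decide : ∀ i < 18, Pu i ⊆ Finset.Icc 1 16) i (by omega)
  · intro i h1 h17 v hv hnv u hE
    exact (by decide :
        ∀ i < 18, ∀ v ∈ Pu i, v ∉ Pu (i - 1) → predF v ⊆ Pu (i - 1)) i (by omega) v hv hnv
      (mem_predF_of_myE hE)
  · intro v hv hno
    by_cases hv16 : v = 16
    · exact ⟨17, by omega, le_refl 17, by rw [hv16]; decide⟩
    · rw [Finset.mem_Icc] at hv
      exact absurd (Or.inl ⟨hv.1, by omega, rfl⟩ : myE v (v + 1)) (hno (v + 1))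

lemma legal_Pb : LegalPebbling (Finset.Icc 1 16) myE 16 Pb := by
  refine ⟨by decide, ?_, ?_, ?_⟩
  · intro i hi
    exact (by decide : ∀ i < 17, Pb i ⊆ Finset.Icc 1 16) i (by omega)
  · intro i h1 h16 v hv hnv u hE
    exact (by decide :
        ∀ i < 17, ∀ v ∈ Pb i, v ∉ Pb (i - 1) → predF v ⊆ Pb (i - 1)) i (by omega) v hv hnv
      (mem_predF_of_myE hE)
  · intro v hv hno
    by_cases hv16 : v = 16
    · exact ⟨16, by omega, le_refl 16, by rw [hv16]; decide⟩
    · rw [Finset.mem_Icc] at hv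
      exact absurd (Or.inl ⟨hv.1, by omega, rfl⟩ : myE v (v + 1)) (hno (v + 1))

lemma cc_Pu : cc 17 Pu = 21 := by decide

lemma cc_Pb : cc 16 Pb = 22 := by decide

/-- Lower bound: any legal pebbling in at most 16 rounds costs at least 22. -/
lemma lower_bound (t : ℕ) (P : ℕ → Finset ℕ) (ht : t ≤ 16)
    (hL : LegalPebbling (Finset.Icc 1 16) myE t P) : 22 ≤ cc t P := by
  obtain ⟨h0, hV, hstep, hsink⟩ := hL
  -- any pebble at round j has label ≤ j
  have upb : ∀ j, j ≤ t → ∀ v ∈ P j, v ≤ j := by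
    intro j
    induction j with
    | zero => intro _ v hv; rw [h0] at hv; exact absurd hv (Finset.notMem_empty v)
    | succ n ih =>
      intro hj v hv
      by_cases hvn : v ∈ P n
      · have := ih (by omega) v hvn; omega
      · have hvV := hV (n + 1) hj hv
        rw [Finset.mem_Icc] at hvV
        rcases Nat.lt_or_ge v 2 with h2 | h2
        · omega
        · have hmem := hstep (n + 1) (by omega) hj v hv (by simpa using hvn) (v - 1)
            (Or.inl ⟨by omega, by omega, by omega⟩)
          have := ih (by omega) (v - 1) (by simpa using hmem)
          omega
  have hno16 : ∀ w, ¬ myE 16 w := by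
    intro w hw
    rcases hw with ⟨a, b, c⟩ | ⟨a, b⟩ | ⟨a, b⟩ | ⟨a, b⟩ <;> omega
  obtain ⟨j, hj1, hjt, hj16⟩ := hsink 16 (by decide) hno16
  have hj16' : 16 ≤ j := upb j hjt 16 hj16
  have ht16 : t = 16 := by omega
  subst ht16
  have hjeq : j = 16 := by omega
  rw [hjeq] at hj16
  -- if v ∈ P v then all predecessors of v lie in P (v-1)
  have key : ∀ v, 2 ≤ v → v ≤ 16 → v ∈ P v → ∀ u, myE u v → u ∈ P (v - 1) := by
    intro v h2 h16' hv u hE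
    have hnot : v ∉ P (v - 1) := fun hmem => by
      have := upb (v - 1) (by omega) v hmem; omega
    exact hstep v (by omega) h16' v hv hnot u hE
  have h15 : 15 ∈ P 15 := by
    have := key 16 (by omega) (by omega) hj16 15 (Or.inl (by omega)); simpa using this
  have h4 : 4 ∈ P 15 := by
    have := key 16 (by omega) (by omega) hj16 4 (Or.inr (Or.inr (Or.inr ⟨rfl, rfl⟩)))
    simpa using this
  have h14 : 14 ∈ P 14 := by
    have := key 15 (by omega) (by omega) h15 14 (Or.inl (by omega)); simpa using this
  have h2' : 2 ∈ P 14 := by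
    have := key 15 (by omega) (by omega) h15 2 (Or.inr (Or.inr (Or.inl ⟨rfl, rfl⟩)))
    simpa using this
  have h13 : 13 ∈ P 13 := by
    have := key 14 (by omega) (by omega) h14 13 (Or.inl (by omega)); simpa using this
  have h1' : 1 ∈ P 13 := by
    have := key 14 (by omega) (by omega) h14 1 (Or.inr (Or.inl ⟨rfl, rfl⟩))
    simpa using this
  have h12 : 12 ∈ P 12 := by
    have := key 13 (by omega) (by omega) h13 12 (Or.inl (by omega)); simpa using this
  have h11 : 11 ∈ P 11 := by
    have := key 12 (by omega) (by omega) h12 11 (Or.inl (by omega)); simpa using this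
  have h10 : 10 ∈ P 10 := by
    have := key 11 (by omega) (by omega) h11 10 (Or.inl (by omega)); simpa using this
  have h9 : 9 ∈ P 9 := by
    have := key 10 (by omega) (by omega) h10 9 (Or.inl (by omega)); simpa using this
  have h8 : 8 ∈ P 8 := by
    have := key 9 (by omega) (by omega) h9 8 (Or.inl (by omega)); simpa using this
  have h7 : 7 ∈ P 7 := by
    have := key 8 (by omega) (by omega) h8 7 (Or.inl (by omega)); simpa using this
  have h6 : 6 ∈ P 6 := by
    have := key 7 (by omega) (by omega) h7 6 (Or.inl (by omega)); simpa using this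
  have h5 : 5 ∈ P 5 := by
    have := key 6 (by omega) (by omega) h6 5 (Or.inl (by omega)); simpa using this
  have h4' : 4 ∈ P 4 := by
    have := key 5 (by omega) (by omega) h5 4 (Or.inl (by omega)); simpa using this
  have h3' : 3 ∈ P 3 := by
    have := key 4 (by omega) (by omega) h4' 3 (Or.inl (by omega)); simpa using this
  have h2'' : 2 ∈ P 2 := by
    have := key 3 (by omega) (by omega) h3' 2 (Or.inl (by omega)); simpa using this
  have h1'' : 1 ∈ P 1 := by
    have := key 2 (by omega) (by omega) h2'' 1 (Or.inl (by omega)); simpa using this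
  -- descent from the forced pebble (4, 15)
  have d14 : ∃ w, w ∈ P 14 ∧ 3 ≤ w ∧ w ≤ 4 := by
    by_cases h : 4 ∈ P 14
    · exact ⟨4, h, by omega, by omega⟩
    · have := hstep 15 (by omega) (by omega) 4 h4 (by simpa using h) 3 (Or.inl (by omega))
      exact ⟨3, by simpa using this, by omega, by omega⟩
  obtain ⟨w14, hw14, hw14a, hw14b⟩ := d14
  have d13 : ∃ w, w ∈ P 13 ∧ 2 ≤ w ∧ w ≤ 4 := by
    by_cases h : w14 ∈ P 13
    · exact ⟨w14, h, by omega, by omega⟩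
    · have := hstep 14 (by omega) (by omega) w14 hw14 (by simpa using h) (w14 - 1)
        (Or.inl ⟨by omega, by omega, by omega⟩)
      exact ⟨w14 - 1, by simpa using this, by omega, by omega⟩
  obtain ⟨w13, hw13, hw13a, hw13b⟩ := d13
  have d12 : ∃ w, w ∈ P 12 ∧ 1 ≤ w ∧ w ≤ 4 := by
    by_cases h : w13 ∈ P 12
    · exact ⟨w13, h, by omega, by omega⟩
    · have := hstep 13 (by omega) (by omega) w13 hw13 (by simpa using h) (w13 - 1)
        (Or.inl ⟨by omega, by omega, by omega⟩)
      exact ⟨w13 - 1, by simpa using this, by omega, by omega⟩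
  obtain ⟨w12, hw12, hw12a, hw12b⟩ := d12
  -- cardinality bounds
  have c12 : 2 ≤ (P 12).card := by
    have hsub : ({12, w12} : Finset ℕ) ⊆ P 12 := by
      intro x hx
      rcases Finset.mem_insert.mp hx with rfl | hx
      · exact h12
      · rw [Finset.mem_singleton.mp hx]; exact hw12
    have hcard : ({12, w12} : Finset ℕ).card = 2 := by
      rw [Finset.card_insert_of_notMem (by rw [Finset.mem_singleton]; omega),
        Finset.card_singleton]
    exact hcard ▸ Finset.card_le_card hsub
  have c13 : 3 ≤ (P 13).card := by
    have hsub : ({13, 1, w13} : Finset ℕ) ⊆ P 13 := by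
      intro x hx
      rcases Finset.mem_insert.mp hx with rfl | hx
      · exact h13
      · rcases Finset.mem_insert.mp hx with rfl | hx
        · exact h1'
        · rw [Finset.mem_singleton.mp hx]; exact hw13
    have hcard : ({13, 1, w13} : Finset ℕ).card = 3 := by
      rw [Finset.card_insert_of_notMem (by
          simp only [Finset.mem_insert, Finset.mem_singleton]; omega),
        Finset.card_insert_of_notMem (by rw [Finset.mem_singleton]; omega),
        Finset.card_singleton]
    exact hcard ▸ Finset.card_le_card hsub
  have c14 : 3 ≤ (P 14).card := by
    have hsub : ({14, 2, w14} : Finset ℕ) ⊆ P 14 := by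
      intro x hx
      rcases Finset.mem_insert.mp hx with rfl | hx
      · exact h14
      · rcases Finset.mem_insert.mp hx with rfl | hx
        · exact h2'
        · rw [Finset.mem_singleton.mp hx]; exact hw14
    have hcard : ({14, 2, w14} : Finset ℕ).card = 3 := by
      rw [Finset.card_insert_of_notMem (by
          simp only [Finset.mem_insert, Finset.mem_singleton]; omega),
        Finset.card_insert_of_notMem (by rw [Finset.mem_singleton]; omega),
        Finset.card_singleton]
    exact hcard ▸ Finset.card_le_card hsub
  have c15 : 2 ≤ (P 15).card := by
    have hsub : ({15, 4} : Finset ℕ) ⊆ P 15 := by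
      intro x hx
      rcases Finset.mem_insert.mp hx with rfl | hx
      · exact h15
      · rw [Finset.mem_singleton.mp hx]; exact h4
    exact (by decide : ({15, 4} : Finset ℕ).card = 2) ▸ Finset.card_le_card hsub
  -- summing up
  have hsum : ∀ i ∈ Finset.Icc 1 16,
      (if i = 13 ∨ i = 14 then 3 else if i = 12 ∨ i = 15 then 2 else 1) ≤ (P i).card := by
    intro i hi
    rw [Finset.mem_Icc] at hi
    obtain ⟨hi1, hi2⟩ := hi
    interval_cases i <;> norm_num
    · exact ⟨1, h1''⟩
    · exact ⟨2, h2''⟩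
    · exact ⟨3, h3'⟩
    · exact ⟨4, h4'⟩
    · exact ⟨5, h5⟩
    · exact ⟨6, h6⟩
    · exact ⟨7, h7⟩
    · exact ⟨8, h8⟩
    · exact ⟨9, h9⟩
    · exact ⟨10, h10⟩
    · exact ⟨11, h11⟩
    · exact c12
    · exact c13
    · exact c14
    · exact c15
    · exact ⟨16, hj16⟩
  calc (22 : ℕ) = ∑ i ∈ Finset.Icc 1 16,
        (if i = 13 ∨ i = 14 then 3 else if i = 12 ∨ i = 15 then 2 else 1) := by decide
    _ ≤ ∑ i ∈ Finset.Icc 1 16, (P i).card := Finset.sum_le_sum hsum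
    _ = cc 16 P := rfl

/-- There exists a DAG `G` on the 16 nodes `{1,…,16}` containing the Hamiltonian directed
path `1 → 2 → ⋯ → 16` (so `depth(G) = 16`, since all edges go from lower to higher label),
such that the minimum cumulative cost over legal pebblings taking at most 16 rounds is
strictly greater than `pcc(G)`; in fact the ratio is at least `28/27`. -/
theorem stmt8 :
    ∃ E : ℕ → ℕ → Prop,
      (∀ u v, E u v → 1 ≤ u ∧ u < v ∧ v ≤ 16) ∧
      (∀ i, 1 ≤ i → i < 16 → E i (i + 1)) ∧
      (sInf {x | ∃ t P, LegalPebbling (Finset.Icc 1 16) E t P ∧ cc t P = x} <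
        sInf {x | ∃ t P, t ≤ 16 ∧ LegalPebbling (Finset.Icc 1 16) E t P ∧ cc t P = x}) ∧
      (28 * sInf {x | ∃ t P, LegalPebbling (Finset.Icc 1 16) E t P ∧ cc t P = x} ≤
        27 * sInf {x | ∃ t P, t ≤ 16 ∧ LegalPebbling (Finset.Icc 1 16) E t P ∧ cc t P = x}) := by
  refine ⟨myE, ?_, ?_, ?_, ?_⟩
  · intro u v h
    rcases h with ⟨a, b, c⟩ | ⟨a, b⟩ | ⟨a, b⟩ | ⟨a, b⟩ <;> omega
  · intro i h1 h16
    exact Or.inl ⟨h1, by omega, rfl⟩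
  all_goals {
    have hA : sInf {x | ∃ t P, LegalPebbling (Finset.Icc 1 16) myE t P ∧ cc t P = x} ≤ 21 :=
      Nat.sInf_le ⟨17, Pu, legal_Pu, cc_Pu⟩
    have hBne : (22 : ℕ) ∈ {x | ∃ t P, t ≤ 16 ∧
        LegalPebbling (Finset.Icc 1 16) myE t P ∧ cc t P = x} :=
      ⟨16, Pb, le_refl 16, legal_Pb, cc_Pb⟩
    have hBmem := Nat.sInf_mem ⟨22, hBne⟩
    obtain ⟨t, P, ht, hL, hcc⟩ := hBmem
    have hB : 22 ≤ sInf {x | ∃ t P, t ≤ 16 ∧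
        LegalPebbling (Finset.Icc 1 16) myE t P ∧ cc t P = x} :=
      hcc ▸ lower_bound t P ht hL
    omega
  }
end

section
/- Any legal pebbling of a k-pyramid DAG must at some round have at least k pebbles on the graph: for any legal pebbling P = (P_0, ..., P_t) of the pyramid with k levels (level j has j nodes, each node at level j < k has edges from two adjacent nodes at level j+1, apex at level 1 is the sink), there exists a round i with |P_i| ≥ k. -/
def PyrV (k : ℕ) : Set (ℕ × ℕ) := {q | 1 ≤ q.1 ∧ q.1 ≤ k ∧ 1 ≤ q.2 ∧ q.2 ≤ q.1}

def PyrEdge (k : ℕ) (u v : ℕ × ℕ) : Prop :=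
  1 ≤ v.1 ∧ v.1 < k ∧ 1 ≤ v.2 ∧ v.2 ≤ v.1 ∧ u.1 = v.1 + 1 ∧ (u.2 = v.2 ∨ u.2 = v.2 + 1)

def PyrLegal (k t : ℕ) (P : ℕ → Finset (ℕ × ℕ)) : Prop :=
  P 0 = ∅ ∧
  (∀ i ≤ t, ∀ v ∈ P i, v ∈ PyrV k) ∧
  (∀ i, 1 ≤ i → i ≤ t → ∀ v ∈ P i, v ∉ P (i - 1) →
    ∀ u, PyrEdge k u v → u ∈ P (i - 1)) ∧
  (∃ j, 1 ≤ j ∧ j ≤ t ∧ (1, 1) ∈ P j)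

/-- There is a pebble-free descending path from `v` down to level `k` in config `C`. -/
def FreeB (k : ℕ) (C : Finset (ℕ × ℕ)) (v : ℕ × ℕ) : Prop :=
  ∃ f : ℕ → ℕ, f v.1 = v.2 ∧
    (∀ m, v.1 ≤ m → m < k → (f (m+1) = f m ∨ f (m+1) = f m + 1)) ∧
    (∀ m, v.1 ≤ m → m ≤ k → (m, f m) ∉ C)

lemma key (k t : ℕ) (P : ℕ → Finset (ℕ × ℕ))
    (hrule : ∀ i, 1 ≤ i → i ≤ t → ∀ v ∈ P i, v ∉ P (i - 1) →
      ∀ u, PyrEdge k u v → u ∈ P (i - 1)) :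
    ∀ n : ℕ, ∀ v : ℕ × ℕ, k - v.1 = n → 1 ≤ v.1 → v.1 ≤ k → 1 ≤ v.2 → v.2 ≤ v.1 →
    ∀ t1 t2 : ℕ, t1 ≤ t2 → t2 ≤ t → FreeB k (P t1) v → v ∈ P t2 →
    ∃ i, t1 < i ∧ i ≤ t2 ∧
      n + 1 ≤ ((P i).filter
        (fun q => v.1 ≤ q.1 ∧ v.2 ≤ q.2 ∧ q.2 ≤ v.2 + (q.1 - v.1))).card := by
  classical
  intro n
  induction n with
  | zero =>
    intro v hkv hv1 hvk hv2 hv21 t1 t2 h12 h2t hfree hvP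
    refine ⟨t2, ?_, le_rfl, ?_⟩
    · obtain ⟨f, hf1, _, hfnot⟩ := hfree
      have hv : (v.1, f v.1) = v := by rw [hf1]
      have : v ∉ P t1 := by rw [← hv]; exact hfnot v.1 le_rfl hvk
      rcases lt_or_eq_of_le h12 with h | h
      · exact h
      · exact absurd (h ▸ hvP) this
    · have : v ∈ (P t2).filter
          (fun q => v.1 ≤ q.1 ∧ v.2 ≤ q.2 ∧ q.2 ≤ v.2 + (q.1 - v.1)) := by
        simp [Finset.mem_filter, hvP]
      exact Finset.one_le_card.mpr ⟨v, this⟩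
  | succ n ih =>
    intro v hkv hv1 hvk hv2 hv21 t1 t2 h12 h2t hfree hvP
    have hvltk : v.1 < k := by omega
    -- v is not pebbled at t1
    have hvnot1 : v ∉ P t1 := by
      obtain ⟨f, hf1, _, hfnot⟩ := hfree
      have hv : (v.1, f v.1) = v := by rw [hf1]
      rw [← hv]; exact hfnot v.1 le_rfl hvk
    -- t2' : first time after t1 when v is pebbled
    have hex : ∃ τ, t1 < τ ∧ v ∈ P τ := by
      refine ⟨t2, ?_, hvP⟩
      rcases lt_or_eq_of_le h12 with h | h
      · exact h
      · exact absurd (h ▸ hvP) hvnot1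
    set t2' := Nat.find hex with ht2'def
    obtain ⟨ht2'gt, ht2'mem⟩ := Nat.find_spec hex
    have ht2'le : t2' ≤ t2 := Nat.find_le ⟨by
      rcases lt_or_eq_of_le h12 with h | h
      · exact h
      · exact absurd (h ▸ hvP) hvnot1, hvP⟩
    have hvnot : ∀ τ, t1 ≤ τ → τ < t2' → v ∉ P τ := by
      intro τ hτ1 hτ2
      rcases lt_or_eq_of_le hτ1 with h | h
      · intro hmem
        exact Nat.find_min hex hτ2 ⟨h, hmem⟩
      · rw [← h]; exact hvnot1
    -- t1' : last time in [t1, t2') with a free path from v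
    set Q : ℕ → Prop := fun τ => t1 ≤ τ ∧ FreeB k (P τ) v with hQdef
    have hb : t1 ≤ t2' - 1 := by omega
    set t1' := Nat.findGreatest Q (t2' - 1) with ht1'def
    have hQt1' : Q t1' := Nat.findGreatest_spec hb ⟨le_rfl, hfree⟩
    obtain ⟨ht1le, hfree'⟩ := hQt1'
    have ht1'le : t1' ≤ t2' - 1 := Nat.findGreatest_le _
    have hnotfree : ∀ τ, t1' < τ → τ < t2' → ¬ FreeB k (P τ) v := by
      intro τ hτ1 hτ2 hf
      exact Nat.findGreatest_is_greatest hτ1 (by omega) ⟨by omega, hf⟩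
    -- the parent u on the free path at time t1'
    obtain ⟨f, hf1, hfstep, hfnot⟩ := hfree'
    set u : ℕ × ℕ := (v.1 + 1, f (v.1 + 1)) with hudef
    have hustep : f (v.1 + 1) = v.2 ∨ f (v.1 + 1) = v.2 + 1 := by
      have := hfstep v.1 le_rfl hvltk
      rw [hf1] at this; exact this
    have hu2 : 1 ≤ u.2 := by rcases hustep with h | h <;> simp [hudef, h] <;> omega
    have hu21 : u.2 ≤ u.1 := by rcases hustep with h | h <;> simp [hudef, h] <;> omega
    -- placement rule at time t2' gives u ∈ P (t2' - 1)
    have hvnotprev : v ∉ P (t2' - 1) := hvnot (t2' - 1) hb (by omega)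
    have huprev : u ∈ P (t2' - 1) :=
      hrule t2' (by omega) (le_trans ht2'le h2t) v ht2'mem hvnotprev u
        ⟨hv1, hvltk, hv2, hv21, by simp [hudef], by simpa [hudef] using hustep⟩
    -- u not pebbled at t1', free path from u at t1'
    have hunot : u ∉ P t1' := by
      have := hfnot (v.1 + 1) (by omega) (by omega)
      simpa [hudef] using this
    have hufree : FreeB k (P t1') u := by
      refine ⟨f, rfl, ?_, ?_⟩
      · intro m hm hmk; exact hfstep m (by simp [hudef] at hm ⊢; omega) hmk
      · intro m hm hmk; exact hfnot m (by simp [hudef] at hm ⊢; omega) hmk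
    -- σ : first time after t1' when u is pebbled
    have huex : ∃ τ, t1' < τ ∧ u ∈ P τ := by
      refine ⟨t2' - 1, ?_, huprev⟩
      rcases lt_or_eq_of_le ht1'le with h | h
      · exact h
      · exact absurd (h ▸ huprev) hunot
    set σ := Nat.find huex with hσdef
    obtain ⟨hσgt, hσmem⟩ := Nat.find_spec huex
    have hσle : σ ≤ t2' - 1 := Nat.find_le ⟨by
      rcases lt_or_eq_of_le ht1'le with h | h
      · exact h
      · exact absurd (h ▸ huprev) hunot, huprev⟩
    -- apply the IH to u
    have hku : k - u.1 = n := by simp [hudef]; omega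
    obtain ⟨i, hi1, hi2, hicard⟩ := ih u hku (by simp only [hudef]; omega)
      (by simp only [hudef]; omega) hu2 hu21 t1' σ (le_of_lt hσgt) (by omega) hufree hσmem
    have hile2 : i ≤ t2 := le_trans hi2 (le_trans hσle (le_trans (Nat.sub_le _ _) ht2'le))
    have hti : t1 < i := lt_of_le_of_lt ht1le hi1
    -- at time i, no free path from v, and v unpebbled: the other diagonal is blocked
    have hilt : i < t2' := by omega
    have hnf : ¬ FreeB k (P i) v := hnotfree i (by omega) hilt
    have hvnoti : v ∉ P i := hvnot i (by omega) hilt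
    -- construct blocking pebble w outside pyr(u)
    have hblock : ∃ m, v.1 + 1 ≤ m ∧ m ≤ k ∧ (m, (if f (v.1+1) = v.2 then v.2 + (m - v.1) else v.2)) ∈ P i := by
      by_cases hc : f (v.1 + 1) = v.2
      · -- u is left parent; right diagonal g m = v.2 + (m - v.1)
        simp only [if_pos hc]
        by_contra hnone
        push_neg at hnone
        apply hnf
        refine ⟨fun m => v.2 + (m - v.1), by simp, ?_, ?_⟩
        · intro m hm _; right
          show v.2 + (m + 1 - v.1) = v.2 + (m - v.1) + 1; omega
        · intro m hm hmk hmem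
          have hmem' : (m, v.2 + (m - v.1)) ∈ P i := hmem
          rcases lt_or_eq_of_le hm with h | h
          · exact hnone m (by omega) hmk hmem'
          · apply hvnoti
            have he : (m, v.2 + (m - v.1)) = v := by rw [← h]; simp
            rwa [he] at hmem'
      · -- u is right parent; left diagonal g m = v.2
        simp only [if_neg hc]
        by_contra hnone
        push_neg at hnone
        apply hnf
        refine ⟨fun _ => v.2, rfl, ?_, ?_⟩
        · intro m _ _; left; rfl
        · intro m hm hmk hmem
          have hmem' : ((m : ℕ), v.2) ∈ P i := hmem
          rcases lt_or_eq_of_le hm with h | h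
          · exact hnone m (by omega) hmk hmem'
          · apply hvnoti
            have he : ((m : ℕ), v.2) = v := by rw [← h]
            rwa [he] at hmem'
    obtain ⟨m, hm1, hmk, hwmem⟩ := hblock
    set w : ℕ × ℕ := (m, if f (v.1+1) = v.2 then v.2 + (m - v.1) else v.2) with hwdef
    -- w is in pyr(v) but not pyr(u)
    have hupyr : ∀ q : ℕ × ℕ, (u.1 ≤ q.1 ∧ u.2 ≤ q.2 ∧ q.2 ≤ u.2 + (q.1 - u.1)) →
        (v.1 ≤ q.1 ∧ v.2 ≤ q.2 ∧ q.2 ≤ v.2 + (q.1 - v.1)) := by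
      intro q ⟨h1, h2, h3⟩
      simp only [hudef] at h1 h2 h3
      rcases hustep with h | h <;> rw [h] at h2 h3 <;> exact ⟨by omega, by omega, by omega⟩
    have hwin : v.1 ≤ w.1 ∧ v.2 ≤ w.2 ∧ w.2 ≤ v.2 + (w.1 - v.1) := by
      simp only [hwdef]
      split <;> exact ⟨by omega, by omega, by omega⟩
    have hwout : ¬ (u.1 ≤ w.1 ∧ u.2 ≤ w.2 ∧ w.2 ≤ u.2 + (w.1 - u.1)) := by
      simp only [hwdef, hudef]
      rcases hustep with h | h <;> rw [h] <;> simp [h] <;> omega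
    -- count
    set S := (P i).filter (fun q => u.1 ≤ q.1 ∧ u.2 ≤ q.2 ∧ q.2 ≤ u.2 + (q.1 - u.1)) with hSdef
    have hwS : w ∉ S := by
      simp only [hSdef, Finset.mem_filter]
      rintro ⟨_, h⟩; exact hwout h
    have hsub : insert w S ⊆ (P i).filter
        (fun q => v.1 ≤ q.1 ∧ v.2 ≤ q.2 ∧ q.2 ≤ v.2 + (q.1 - v.1)) := by
      intro q hq
      rcases Finset.mem_insert.mp hq with h | h
      · subst h; exact Finset.mem_filter.mpr ⟨hwmem, hwin⟩
      · obtain ⟨hqP, hqpyr⟩ := Finset.mem_filter.mp h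
        exact Finset.mem_filter.mpr ⟨hqP, hupyr q hqpyr⟩
    refine ⟨i, hti, hile2, ?_⟩
    calc n + 1 + 1 ≤ S.card + 1 := Nat.add_le_add_right hicard 1
    _ = (insert w S).card := (Finset.card_insert_of_notMem hwS).symm
    _ ≤ _ := Finset.card_le_card hsub

/-- Any legal pebbling of the `k`-pyramid must at some round have at least `k` pebbles
on the graph. -/
theorem stmt17 (k t : ℕ) (P : ℕ → Finset (ℕ × ℕ)) (hP : PyrLegal k t P) :
    ∃ i, i ≤ t ∧ k ≤ (P i).card := by
  obtain ⟨h0, _, hrule, j, hj1, hjt, hapex⟩ := hP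
  rcases Nat.eq_zero_or_pos k with hk | hk
  · exact ⟨0, Nat.zero_le t, by omega⟩
  have hfree : FreeB k (P 0) (1, 1) := by
    refine ⟨fun _ => 1, rfl, fun m _ _ => Or.inl rfl, ?_⟩
    intro m _ _; rw [h0]; exact Finset.notMem_empty _
  obtain ⟨i, hi1, hi2, hicard⟩ := key k t P hrule (k - 1) (1, 1) (by simp) le_rfl hk le_rfl
    le_rfl 0 j (Nat.zero_le j) hjt hfree hapex
  refine ⟨i, le_trans hi2 hjt, ?_⟩
  calc k ≤ k - 1 + 1 := by omega
  _ ≤ _ := hicard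
  |>.trans (Finset.card_filter_le _ _)
end
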